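/- Let λ ≥ 1 and for each k ∈ Z³ with |k| = λ choose A_k ⊥ k, |A_k| = 1/√2, A_{−k} = A_k, and set B_k = A_k + i(k/|k|)×A_k. For coefficients a_k ∈ C with conj(a_k) = a_{−k}, the field W(x) = Σ_{|k|=λ} a_k B_k e^{ik·x} is real-valued, and its average Reynolds stress satisfies |T³|^{−1} ∫_{T³} W ⊗ W dx = (1/2) Σ_{|k|=λ} |a_k|² (Id − (k/|k|)⊗(k/|k|)). -/

import Mathlib

/-!
The symmetry `a_{-k} B_{-k} = conj (a_k B_k)` pairs each mode of `W` with its complex conjugate,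
so `W` is real. For the stress, orthogonality of the plane waves on `T³` kills every product
`e^{ik·x} e^{ik'·x}` with `k' ≠ -k`, so the average of `W_i W_j` is
`Σ_k |a_k|² B_k,i conj (B_k,j)`. Its real part is `|A_k|² (δ_ij - v_i v_j)` with `v = k/|k|`,
because `v`, `A_k`, `v × A_k` are mutually orthogonal and `|v × A_k| = |A_k|`.
-/

open Complex MeasureTheory Real
open ComplexConjugate

noncomputable def planeWave {ι : Type*} [Fintype ι] (k : ι → ℤ) (x : ι → ℝ) : ℂ :=
  Complex.exp (I * ↑(∑ i, (k i : ℝ) * x i))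

section planeWave

variable {ι : Type*} [Fintype ι]

lemma planeWave_add (k k' : ι → ℤ) (x : ι → ℝ) :
    planeWave (k + k') x = planeWave k x * planeWave k' x := by
  simp only [planeWave, ← Complex.exp_add, ← mul_add, ← ofReal_add, ← Finset.sum_add_distrib,
    Pi.add_apply, Int.cast_add, add_mul]

lemma planeWave_neg (k : ι → ℤ) (x : ι → ℝ) :
    planeWave (-k) x = conj (planeWave k x) := by
  simp only [planeWave, ← Complex.exp_conj, map_mul, conj_I, conj_ofReal, Pi.neg_apply,
    Int.cast_neg, neg_mul, Finset.sum_neg_distrib, ofReal_neg, mul_neg]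

@[fun_prop]
lemma continuous_planeWave (k : ι → ℤ) : Continuous (planeWave k) := by
  unfold planeWave; fun_prop

lemma integral_exp_int_mul_I_Ioc (m : ℤ) :
    ∫ t in Set.Ioc 0 (2 * π), Complex.exp (I * (m * t))
      = if m = 0 then ((2 * π : ℝ) : ℂ) else 0 := by
  rw [← intervalIntegral.integral_of_le (by positivity)]
  split_ifs with hm
  · simp [hm]
  · have hc : I * m ≠ 0 := mul_ne_zero I_ne_zero (Int.cast_ne_zero.mpr hm)
    have hperiod : Complex.exp (I * m * (2 * π)) = 1 := by
      rw [← exp_int_mul_two_pi_mul_I m]; ring_nf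
    simp only [← mul_assoc, integral_exp_mul_complex hc]
    simp [hperiod]

lemma setIntegral_planeWave (k : ι → ℤ) :
    ∫ x in Set.univ.pi fun _ : ι => Set.Ioc 0 (2 * π), planeWave k x
      = if k = 0 then (((2 * π) ^ Fintype.card ι : ℝ) : ℂ) else 0 := by
  have hprod : ∀ x : ι → ℝ, planeWave k x = ∏ i, Complex.exp (I * (k i * x i)) := fun x => by
    simp only [planeWave, ← Complex.exp_sum, ofReal_sum, Finset.mul_sum, ofReal_mul, ofReal_intCast]
  simp_rw [hprod]
  rw [volume_pi, Measure.restrict_pi_pi,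
    integral_fintype_prod_eq_prod fun i (t : ℝ) => Complex.exp (I * (k i * t))]
  simp_rw [integral_exp_int_mul_I_Ioc]
  split_ifs with hk
  · simp [hk]
  · obtain ⟨i, hi⟩ := Function.ne_iff.mp hk
    exact Finset.prod_eq_zero (Finset.mem_univ i) (if_neg hi)

lemma integrableOn_planeWave (k : ι → ℤ) :
    IntegrableOn (planeWave k) (Set.univ.pi fun _ : ι => Set.Ioc 0 (2 * π)) :=
  ((continuous_planeWave k).continuousOn.integrableOn_compact
    (isCompact_univ_pi fun _ => isCompact_Icc)).mono_set
    (Set.pi_mono fun _ _ => Set.Ioc_subset_Icc_self)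

lemma im_sum_planeWave_eq_zero {K : Finset (ι → ℤ)} (hK : ∀ k ∈ K, -k ∈ K)
    {c : (ι → ℤ) → ℂ} (hc : ∀ k ∈ K, c (-k) = conj (c k)) (x : ι → ℝ) :
    (∑ k ∈ K, c k * planeWave k x).im = 0 := by
  rw [← conj_eq_iff_im, map_sum]
  refine Finset.sum_nbij' (- ·) (- ·) hK hK (fun _ _ => neg_neg _) (fun _ _ => neg_neg _) ?_
  intro k hk
  rw [map_mul, ← hc k hk, ← planeWave_neg]

lemma setIntegral_sum_planeWave_mul_sum_planeWave {K : Finset (ι → ℤ)} (hK : ∀ k ∈ K, -k ∈ K)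
    (c d : (ι → ℤ) → ℂ) :
    ∫ x in Set.univ.pi fun _ : ι => Set.Ioc 0 (2 * π),
        (∑ k ∈ K, c k * planeWave k x) * (∑ k ∈ K, d k * planeWave k x)
      = (((2 * π) ^ Fintype.card ι : ℝ) : ℂ) * ∑ k ∈ K, c k * d (-k) := by
  simp_rw [Finset.sum_mul_sum, mul_mul_mul_comm _ (planeWave _ _), ← planeWave_add]
  rw [integral_finsetSum _ fun k _ => integrable_finsetSum _ fun k' _ =>
    (integrableOn_planeWave _).const_mul _]
  simp_rw [integral_finsetSum _ fun k' _ => (integrableOn_planeWave (_ + k')).const_mul _,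
    integral_const_mul, setIntegral_planeWave, add_eq_zero_iff_eq_neg', mul_ite, mul_zero,
    Finset.sum_ite_eq', Finset.mul_sum]
  refine Finset.sum_congr rfl fun k hk => ?_
  rw [if_pos (hK k hk), mul_comm]

end planeWave

lemma integral_re_mul_re_of_im_eq_zero {α : Type*} [MeasurableSpace α] {μ : Measure α}
    {f g : α → ℂ} (hf : ∀ x, (f x).im = 0) (hg : ∀ x, (g x).im = 0) :
    ∫ x, (f x).re * (g x).re ∂μ = (∫ x, f x * g x ∂μ).re := by
  have hfg : ∀ x, f x * g x = ((f x).re * (g x).re : ℝ) := fun x => by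
    apply Complex.ext <;> simp [hf x, hg x]
  simp_rw [hfg, integral_complex_ofReal, ofReal_re]

-- `v`, `A/|A|` and `v × A/|A|` form an orthonormal frame, so `A ⊗ A + (v × A) ⊗ (v × A)` is
-- `|A|²` times the projection onto `v⊥`.
lemma mul_add_cross_mul_cross (v A : Fin 3 → ℝ) (hv : ∑ l, v l ^ 2 = 1)
    (hAv : ∑ l, A l * v l = 0) (i j : Fin 3) :
    A i * A j + crossProduct v A i * crossProduct v A j
      = (∑ l, A l ^ 2) * ((if i = j then 1 else 0) - v i * v j) := by
  simp only [Fin.sum_univ_three] at hv hAv ⊢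
  fin_cases i <;> fin_cases j <;>
    simp only [cross_apply, Fin.zero_eta, Fin.isValue, Fin.mk_one, Fin.reduceFinMk, Fin.reduceEq,
      Matrix.cons_val_zero, Matrix.cons_val_one, Matrix.cons_val, zero_ne_one, one_ne_zero,
      ↓reduceIte]
  · linear_combination (A 1^2 + A 2^2) * hv + (A 0*v 0 - A 1*v 1 - A 2*v 2) * hAv
  · linear_combination (-(A 0*A 1)) * hv + (A 0*v 1 + A 1*v 0) * hAv
  · linear_combination (-(A 0*A 2)) * hv + (A 0*v 2 + A 2*v 0) * hAv
  · linear_combination (-(A 0*A 1)) * hv + (A 0*v 1 + A 1*v 0) * hAv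
  · linear_combination (A 0^2 + A 2^2) * hv + (-(A 0*v 0) + A 1*v 1 - A 2*v 2) * hAv
  · linear_combination (-(A 1*A 2)) * hv + (A 1*v 2 + A 2*v 1) * hAv
  · linear_combination (-(A 0*A 2)) * hv + (A 0*v 2 + A 2*v 0) * hAv
  · linear_combination (-(A 1*A 2)) * hv + (A 1*v 2 + A 2*v 1) * hAv
  · linear_combination (A 0^2 + A 1^2) * hv + (-(A 0*v 0) - A 1*v 1 + A 2*v 2) * hAv

noncomputable def beltramiAmplitude (v A : Fin 3 → ℝ) (j : Fin 3) : ℂ :=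
  (A j : ℂ) + I * (crossProduct v A j : ℂ)

lemma beltramiAmplitude_neg (v A : Fin 3 → ℝ) (j : Fin 3) :
    beltramiAmplitude (-v) A j = conj (beltramiAmplitude v A j) := by
  simp only [beltramiAmplitude, map_neg, LinearMap.neg_apply, Pi.neg_apply, ofReal_neg, map_add,
    map_mul, conj_ofReal, conj_I]
  ring

lemma re_beltramiAmplitude_mul_conj (v A : Fin 3 → ℝ) (hv : ∑ l, v l ^ 2 = 1)
    (hAv : ∑ l, A l * v l = 0) (i j : Fin 3) :
    (beltramiAmplitude v A i * conj (beltramiAmplitude v A j)).re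
      = (∑ l, A l ^ 2) * ((if i = j then 1 else 0) - v i * v j) := by
  rw [← mul_add_cross_mul_cross v A hv hAv]
  simp [beltramiAmplitude, mul_re]

lemma sum_div_sq_eq_one {ι : Type*} [Fintype ι] (y : ι → ℝ) {r : ℝ} (hr : r ≠ 0)
    (hy : √(∑ l, y l ^ 2) = r) : ∑ l, (y l / r) ^ 2 = 1 := by
  have hS : ∑ l, y l ^ 2 ≠ 0 := fun h => hr (by rw [← hy, h, Real.sqrt_zero])
  simp_rw [div_pow, ← Finset.sum_div, ← hy, sq_sqrt (Finset.sum_nonneg fun l _ => sq_nonneg _)]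
  exact div_self hS

/-- A Beltrami flow `W(x) = Σ_{|k|=λ} a_k B_k e^{ik·x}` with conjugation
symmetry `conj a_k = a_{-k}`, `A_{-k} = A_k`, is real-valued, and its average Reynolds
stress over the torus `T³ = (ℝ/2πℤ)³` is
`|T³|⁻¹ ∫ W ⊗ W = (1/2) Σ_{|k|=λ} |a_k|² (Id − (k/|k|)⊗(k/|k|))`. -/
theorem beltrami_flow_real_and_average_stress
    (lam : ℝ) (hlam : 1 ≤ lam)
    (K : Finset (Fin 3 → ℤ))
    (hKlam : ∀ k ∈ K, Real.sqrt (∑ i, (k i : ℝ) ^ 2) = lam)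
    (hKfull : ∀ k : Fin 3 → ℤ, Real.sqrt (∑ i, (k i : ℝ) ^ 2) = lam → k ∈ K)
    (A : (Fin 3 → ℤ) → Fin 3 → ℝ)
    (hAsym : ∀ k ∈ K, A (-k) = A k)
    (hAk : ∀ k ∈ K, ∑ i, A k i * (k i : ℝ) = 0)
    (hA : ∀ k ∈ K, ∑ i, A k i ^ 2 = 1 / 2)
    (B : (Fin 3 → ℤ) → Fin 3 → ℂ)
    (hB : ∀ k ∈ K, ∀ j, B k j = (A k j : ℂ)
      + Complex.I * ((crossProduct (fun i => (k i : ℝ) / lam) (A k)) j : ℂ))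
    (a : (Fin 3 → ℤ) → ℂ)
    (ha : ∀ k ∈ K, (starRingEnd ℂ) (a k) = a (-k))
    (W : (Fin 3 → ℝ) → (Fin 3 → ℂ))
    (hW : ∀ x j, W x j =
      ∑ k ∈ K, a k * B k j * Complex.exp (Complex.I * (∑ i, (k i : ℝ) * x i))) :
    -- W is real-valued
    (∀ x j, (W x j).im = 0)
    -- and the average of W ⊗ W over the torus equals the claimed matrix
    ∧ (∀ i j,
        (1 / (2 * π) ^ 3) *
          ∫ x in Set.pi Set.univ (fun _ : Fin 3 => Set.Ioc (0:ℝ) (2 * π)),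
            (W x i).re * (W x j).re
        = (1 / 2) * ∑ k ∈ K, Complex.normSq (a k) *
            ((if i = j then (1:ℝ) else 0) - ((k i : ℝ) / lam) * ((k j : ℝ) / lam))) := by
  have hlam0 : lam ≠ 0 := (zero_lt_one.trans_le hlam).ne'
  have hKneg : ∀ k ∈ K, -k ∈ K := fun k hk => hKfull _ (by simpa using hKlam k hk)
  have hBk : ∀ k ∈ K, B k = beltramiAmplitude (fun l => (k l : ℝ) / lam) (A k) :=
    fun k hk => funext (hB k hk)
  have hcoeff : ∀ j, ∀ k ∈ K, a (-k) * B (-k) j = conj (a k * B k j) := by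
    intro j k hk
    rw [map_mul, ha k hk, hBk _ (hKneg k hk), hBk k hk, hAsym k hk, ← beltramiAmplitude_neg]
    congr 3
    ext l
    simp [neg_div]
  have hW' : ∀ x j, W x j = ∑ k ∈ K, a k * B k j * planeWave k x := hW
  have hWreal : ∀ x j, (W x j).im = 0 := fun x j => by
    rw [hW']; exact im_sum_planeWave_eq_zero hKneg (hcoeff j) x
  refine ⟨hWreal, fun i j => ?_⟩
  rw [integral_re_mul_re_of_im_eq_zero (hWreal · i) (hWreal · j)]
  simp_rw [hW']
  rw [setIntegral_sum_planeWave_mul_sum_planeWave hKneg, re_ofReal_mul, ← mul_assoc,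
    Fintype.card_fin, one_div_mul_cancel (by positivity), one_mul, re_sum, Finset.mul_sum]
  refine Finset.sum_congr rfl fun k hk => ?_
  have hunit := sum_div_sq_eq_one _ hlam0 (hKlam k hk)
  have horth : ∑ l, A k l * ((k l : ℝ) / lam) = 0 := by
    simp_rw [mul_div_assoc', ← Finset.sum_div, hAk k hk, zero_div]
  rw [hcoeff j k hk, map_mul, mul_mul_mul_comm, mul_conj, re_ofReal_mul, hBk k hk,
    re_beltramiAmplitude_mul_conj _ _ hunit horth, hA k hk]
  ring
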